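/- arXiv:1810.03796 — 7 statements merged into one kernel-verified Lean document; each statement's English description precedes it below -/
import Mathlib

section
/- Let n ≥ 2, α ∈ (-n, 0), and φ be a Young function with Λ̲_φ(α) := sup_{x>0} ∫₀¹ φ(t^{1-α} x)/φ(x) · dt/t^{n+1} < ∞. Then for all 0 < s ≤ 1 and x > 0, φ(xs) ≤ 2^{2n} Λ̲_φ(α) φ(2^{1-α} x) s^{n/(1-α)}. -/
open MeasureTheory Set Filter
open scoped ENNReal NNReal Topology

noncomputable def Lunder (n : ℕ) (α : ℝ) (φ : ℝ → ℝ) : ℝ≥0∞ :=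
  ⨆ x ∈ Set.Ioi (0:ℝ), ∫⁻ t in Set.Ioo (0:ℝ) 1,
    ENNReal.ofReal (φ (t ^ (1 - α) * x) / (φ x * t ^ (n + 1)))

noncomputable def Lover (n : ℕ) (α : ℝ) (φ : ℝ → ℝ) : ℝ≥0∞ :=
  ⨆ x ∈ Set.Ioi (0:ℝ), ∫⁻ t in Set.Ioi (1:ℝ),
    ENNReal.ofReal (φ (t ^ (-α) * x) / (φ x * t ^ (n + 1)))

noncomputable def besovSet (n : ℕ) (α : ℝ) (φ : ℝ → ℝ)
    (Ω : Set (EuclideanSpace ℝ (Fin n))) (u : EuclideanSpace ℝ (Fin n) → ℝ) : Set ℝ :=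
  {l : ℝ | 0 < l ∧
    (∫⁻ x in Ω, ∫⁻ y in Ω,
      ENNReal.ofReal (φ (|u x - u y| / (l * ‖x - y‖ ^ α)) / ‖x - y‖ ^ (2 * n))) ≤ 1}

/-!
Put `τ = s ^ (1 / (1 - α))` and `y = 2 ^ (1 - α) x`, so that `τ ^ (1 - α) x = x s`.
For `t ∈ (τ / 2, τ)` monotonicity of `φ` gives `φ (t ^ (1 - α) y) ≥ φ (x s)`, and
`t ^ (n + 1) ≤ τ ^ (n + 1)`, so the integral defining `Lunder n α φ` at the point `y` is at least
`(τ / 2) · φ (x s) / (φ y · τ ^ (n + 1))`. Solving for `φ (x s)` gives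
`φ (x s) ≤ 2 (Lunder n α φ) φ y τ ^ n`, and `τ ^ n = s ^ (n / (1 - α))`. Monotonicity of `φ`
on `[0, ∞)` holds because a convex function attaining its minimum at the left endpoint is
nondecreasing.
-/

theorem ConvexOn.monotoneOn_Ici_of_isMinOn {φ : ℝ → ℝ} {c : ℝ} (hconv : ConvexOn ℝ (Ici c) φ)
    (hmin : IsMinOn φ (Ici c) c) : MonotoneOn φ (Ici c) := by
  intro a ha b hb hab
  rcases (mem_Ici.1 ha).eq_or_lt with rfl | hca
  · exact hmin hb
  · exact hconv.le_right_of_left_le'' self_mem_Ici hb hca hab (hmin ha)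

section

variable {n : ℕ} {α : ℝ} {φ : ℝ → ℝ}

theorem setLIntegral_le_Lunder {y : ℝ} (hy : 0 < y) {s : Set ℝ} (hs : s ⊆ Ioo 0 1) :
    ∫⁻ t in s, ENNReal.ofReal (φ (t ^ (1 - α) * y) / (φ y * t ^ (n + 1))) ≤ Lunder n α φ :=
  (lintegral_mono_set hs).trans <|
    le_biSup (fun y : ℝ => ∫⁻ t in Ioo (0 : ℝ) 1,
      ENNReal.ofReal (φ (t ^ (1 - α) * y) / (φ y * t ^ (n + 1)))) (mem_Ioi.2 hy)

theorem ofReal_half_mul_div_le_Lunder (hmono : MonotoneOn φ (Ici 0)) (hα : α ≤ 1) {y τ : ℝ}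
    (hy : 0 < y) (hφy : 0 < φ y) (hτ : 0 < τ) (hτ1 : τ ≤ 1)
    (hφ : 0 ≤ φ ((τ / 2) ^ (1 - α) * y)) :
    ENNReal.ofReal (τ / 2 * (φ ((τ / 2) ^ (1 - α) * y) / (φ y * τ ^ (n + 1)))) ≤
      Lunder n α φ := by
  set c := φ ((τ / 2) ^ (1 - α) * y) / (φ y * τ ^ (n + 1))
  have hc : 0 ≤ c := by positivity
  have hconst : ENNReal.ofReal (τ / 2 * c) = ∫⁻ _ in Ioo (τ / 2) τ, ENNReal.ofReal c := by
    rw [setLIntegral_const, Real.volume_Ioo, mul_comm, ENNReal.ofReal_mul hc]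
    congr 2
    ring
  have hsub : Ioo (τ / 2) τ ⊆ Ioo 0 1 := fun t ht =>
    ⟨(half_pos hτ).trans ht.1, ht.2.trans_le hτ1⟩
  rw [hconst]
  refine (setLIntegral_mono' measurableSet_Ioo fun t ht => ?_).trans
    (setLIntegral_le_Lunder hy hsub)
  have htpos : 0 < t := (hsub ht).1
  have harg : (τ / 2) ^ (1 - α) * y ≤ t ^ (1 - α) * y := by
    gcongr
    exact ht.1.le
  have hnum : φ ((τ / 2) ^ (1 - α) * y) ≤ φ (t ^ (1 - α) * y) :=
    hmono (mem_Ici.2 (by positivity)) (mem_Ici.2 (by positivity)) harg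
  apply ENNReal.ofReal_le_ofReal
  exact div_le_div₀ (hφ.trans hnum) hnum (by positivity) (by gcongr; exact ht.2.le)

theorem le_two_mul_toReal_Lunder (hmono : MonotoneOn φ (Ici 0)) (hα : α ≤ 1)
    (hfin : Lunder n α φ < ⊤) {y τ : ℝ} (hy : 0 < y) (hφy : 0 < φ y) (hτ : 0 < τ) (hτ1 : τ ≤ 1)
    (hφ : 0 ≤ φ ((τ / 2) ^ (1 - α) * y)) :
    φ ((τ / 2) ^ (1 - α) * y) ≤ 2 * (Lunder n α φ).toReal * φ y * τ ^ n := by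
  have hreal : τ / 2 * (φ ((τ / 2) ^ (1 - α) * y) / (φ y * τ ^ (n + 1))) ≤
      (Lunder n α φ).toReal :=
    (ENNReal.ofReal_le_iff_le_toReal hfin.ne).1
      (ofReal_half_mul_div_le_Lunder hmono hα hy hφy hτ hτ1 hφ)
  have hD : 0 < φ y * τ ^ (n + 1) := by positivity
  rw [mul_div_assoc', div_le_iff₀ hD] at hreal
  calc φ ((τ / 2) ^ (1 - α) * y)
      = τ / 2 * φ ((τ / 2) ^ (1 - α) * y) * (2 / τ) := by field_simp
    _ ≤ (Lunder n α φ).toReal * (φ y * τ ^ (n + 1)) * (2 / τ) := by gcongr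
    _ = 2 * (Lunder n α φ).toReal * φ y * τ ^ n := by rw [pow_succ]; field_simp

end

theorem stmt4_general (n : ℕ) (hn : 2 ≤ n) (α : ℝ) (hα2 : α < 0)
    (φ : ℝ → ℝ)
    (hconv : ConvexOn ℝ (Set.Ici 0) φ)
    (hzero : φ 0 = 0) (hpos : ∀ t > 0, 0 < φ t)
    (hfin : Lunder n α φ < ⊤) :
    ∀ s : ℝ, 0 < s → s ≤ 1 → ∀ x : ℝ, 0 < x →
      φ (x * s) ≤ 2 ^ (2 * n) * (Lunder n α φ).toReal * φ (2 ^ (1 - α) * x)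
        * s ^ ((n : ℝ) / (1 - α)) := by
  intro s hs hs1 x hx
  have hnonneg : ∀ t ∈ Ici (0 : ℝ), 0 ≤ φ t := fun t ht =>
    (mem_Ici.1 ht).eq_or_lt.elim (fun h => h ▸ hzero.ge) fun h => (hpos t h).le
  have hmono : MonotoneOn φ (Ici 0) :=
    hconv.monotoneOn_Ici_of_isMinOn fun t ht => hzero.trans_le (hnonneg t ht)
  have h1α : 0 < 1 - α := by linarith
  set τ := s ^ (1 / (1 - α))
  have hτ : 0 < τ := by positivity
  have hτs : τ ^ (1 - α) = s := by
    rw [← Real.rpow_mul hs.le, one_div_mul_cancel h1α.ne', Real.rpow_one]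
  have harg : (τ / 2) ^ (1 - α) * (2 ^ (1 - α) * x) = x * s := by
    rw [← mul_assoc, ← Real.mul_rpow (by positivity) (by norm_num), div_mul_cancel₀ _ two_ne_zero,
      hτs, mul_comm]
  have hsn : s ^ ((n : ℝ) / (1 - α)) = τ ^ n := by
    rw [← Real.rpow_natCast, ← Real.rpow_mul hs.le, one_div_mul_eq_div]
  have hφy : 0 < φ (2 ^ (1 - α) * x) := hpos _ (by positivity)
  have hbound := le_two_mul_toReal_Lunder hmono (by linarith) hfin (by positivity) hφy hτ
    (Real.rpow_le_one hs.le hs1 (by positivity)) (harg ▸ hnonneg _ (mem_Ici.2 (by positivity)))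
  rw [harg] at hbound
  rw [hsn]
  have h2 : (2 : ℝ) ≤ 2 ^ (2 * n) := le_self_pow₀ one_le_two (by omega)
  exact hbound.trans (by gcongr)

theorem stmt4 (n : ℕ) (hn : 2 ≤ n) (α : ℝ) (hα1 : -(n : ℝ) < α) (hα2 : α < 0)
    (φ : ℝ → ℝ)
    (hconv : ConvexOn ℝ (Set.Ici 0) φ) (hcont : ContinuousOn φ (Set.Ici 0))
    (hzero : φ 0 = 0) (hpos : ∀ t > 0, 0 < φ t)
    (htop : Filter.Tendsto φ Filter.atTop Filter.atTop)
    (hfin : Lunder n α φ < ⊤) :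
    ∀ s : ℝ, 0 < s → s ≤ 1 → ∀ x : ℝ, 0 < x →
      φ (x * s) ≤ 2 ^ (2 * n) * (Lunder n α φ).toReal * φ (2 ^ (1 - α) * x)
        * s ^ ((n : ℝ) / (1 - α)) :=
  stmt4_general n hn α hα2 φ hconv hzero hpos hfin
end

section
/- Let n ≥ 2, α ∈ (-n, 0), and φ be a Young function with Λ̄_φ(α) := sup_{x>0} ∫₁^∞ φ(t^{-α} x)/φ(x) · dt/t^{n+1} < ∞. Then for all s ≥ 1 and x > 0, φ(xs) ≤ 2^{3n} Λ̄_φ(α) φ(x) s^{-n/α}. -/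
open MeasureTheory Set Filter
open scoped ENNReal NNReal Topology

theorem stmt5 (n : ℕ) (hn : 2 ≤ n) (α : ℝ) (hα1 : -(n : ℝ) < α) (hα2 : α < 0)
    (φ : ℝ → ℝ)
    (hconv : ConvexOn ℝ (Set.Ici 0) φ) (hcont : ContinuousOn φ (Set.Ici 0))
    (hzero : φ 0 = 0) (hpos : ∀ t > 0, 0 < φ t)
    (htop : Filter.Tendsto φ Filter.atTop Filter.atTop)
    (hfin : Lover n α φ < ⊤) :
    ∀ s : ℝ, 1 ≤ s → ∀ x : ℝ, 0 < x →
      φ (x * s) ≤ 2 ^ (3 * n) * (Lover n α φ).toReal * φ x * s ^ (-(n : ℝ) / α) := by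
  have hmono : ∀ a b : ℝ, 0 ≤ a → a ≤ b → φ a ≤ φ b := by
    intro a b ha hab
    rcases eq_or_lt_of_le (ha.trans hab) with hb | hb
    · have : a = b := le_antisymm hab (hb ▸ ha)
      rw [this]
    · have hc0 : 0 ≤ a / b := div_nonneg ha hb.le
      have hc1 : a / b ≤ 1 := (div_le_one hb).2 hab
      have := hconv.2 (Set.mem_Ici.2 le_rfl) (Set.mem_Ici.2 hb.le)
        (by linarith : (0:ℝ) ≤ 1 - a / b) hc0 (by ring)
      simp only [smul_eq_mul, mul_zero, zero_add, hzero] at this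
      rw [div_mul_cancel₀ _ hb.ne'] at this
      calc φ a ≤ a / b * φ b := this
        _ ≤ 1 * φ b := mul_le_mul_of_nonneg_right hc1 (hpos b hb).le
        _ = φ b := one_mul _
  intro s hs x hx
  have hα0 : α ≠ 0 := ne_of_lt hα2
  have hs0 : (0:ℝ) < s := lt_of_lt_of_le one_pos hs
  set T : ℝ := s ^ (-1 / α) with hT
  have hexp : (0:ℝ) ≤ -1 / α := le_of_lt (div_pos_of_neg_of_neg (by norm_num) hα2)
  have hT1 : 1 ≤ T := Real.one_le_rpow hs hexp
  have hT0 : 0 < T := lt_of_lt_of_le one_pos hT1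
  have hTs : T ^ (-α) = s := by
    rw [hT, ← Real.rpow_mul hs0.le]
    rw [show -1 / α * -α = 1 by field_simp]
    exact Real.rpow_one s
  have hTn : T ^ n = s ^ (-(n:ℝ) / α) := by
    rw [hT, ← Real.rpow_natCast (s ^ (-1/α)) n, ← Real.rpow_mul hs0.le]
    congr 1
    field_simp
  have hφx : 0 < φ x := hpos x hx
  have hφxs : 0 ≤ φ (x * s) := (hpos _ (by positivity)).le
  -- lower bound on the integral
  set c : ℝ := φ (x * s) / (φ x * (2 * T) ^ (n + 1)) with hc
  have hc0 : 0 ≤ c := by positivity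
  have key : ENNReal.ofReal (c * T) ≤ Lover n α φ := by
    have h1 : ∫⁻ t in Set.Ioo T (2*T), ENNReal.ofReal c
        ≤ ∫⁻ t in Set.Ioo T (2*T),
          ENNReal.ofReal (φ (t ^ (-α) * x) / (φ x * t ^ (n + 1))) := by
      refine lintegral_mono_ae ?_
      rw [ae_restrict_iff' measurableSet_Ioo]
      filter_upwards with t ht
      rcases ht with ⟨ht1, ht2⟩
      have ht0 : 0 < t := lt_trans hT0 ht1
      apply ENNReal.ofReal_le_ofReal
      have hnum : φ (x * s) ≤ φ (t ^ (-α) * x) := by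
        apply hmono _ _ (by positivity)
        have : s ≤ t ^ (-α) := by
          rw [← hTs]
          exact Real.rpow_le_rpow hT0.le ht1.le (by linarith)
        calc x * s = s * x := mul_comm _ _
          _ ≤ t ^ (-α) * x := mul_le_mul_of_nonneg_right this hx.le
      have hden : t ^ (n+1) ≤ (2*T) ^ (n+1) :=
        pow_le_pow_left₀ ht0.le ht2.le _
      rw [hc]
      exact div_le_div₀ (le_trans hφxs hnum) hnum (by positivity)
        (mul_le_mul_of_nonneg_left hden hφx.le)
    have h2 : ∫⁻ t in Set.Ioo T (2*T),
          ENNReal.ofReal (φ (t ^ (-α) * x) / (φ x * t ^ (n + 1)))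
        ≤ ∫⁻ t in Set.Ioi (1:ℝ),
          ENNReal.ofReal (φ (t ^ (-α) * x) / (φ x * t ^ (n + 1))) := by
      apply lintegral_mono_set
      intro t ht
      exact lt_of_le_of_lt hT1 ht.1
    have h3 : (∫⁻ t in Set.Ioi (1:ℝ),
          ENNReal.ofReal (φ (t ^ (-α) * x) / (φ x * t ^ (n + 1)))) ≤ Lover n α φ := by
      apply le_biSup _ (Set.mem_Ioi.2 hx)
    have h0 : ∫⁻ t in Set.Ioo T (2*T), ENNReal.ofReal c = ENNReal.ofReal (c * T) := by
      rw [setLIntegral_const, Real.volume_Ioo]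
      rw [← ENNReal.ofReal_mul hc0]
      congr 1
      ring
    rw [← h0]
    exact le_trans h1 (le_trans h2 h3)
  -- convert to real inequality
  have hL : c * T ≤ (Lover n α φ).toReal := by
    have := ENNReal.toReal_mono hfin.ne key
    rwa [ENNReal.toReal_ofReal (by positivity)] at this
  have hL0 : 0 ≤ (Lover n α φ).toReal := ENNReal.toReal_nonneg
  -- rearrange
  have hB : (0:ℝ) < (2*T) ^ (n+1) := by positivity
  have step : φ (x * s) ≤ (Lover n α φ).toReal * φ x * 2^(n+1) * T ^ n := by
    have hBpos : (0:ℝ) < φ x * (2*T)^(n+1) := by positivity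
    rw [hc, div_mul_eq_mul_div, div_le_iff₀ hBpos] at hL
    apply le_of_mul_le_mul_right _ hT0
    calc φ (x*s) * T ≤ (Lover n α φ).toReal * (φ x * (2*T)^(n+1)) := hL
      _ = (Lover n α φ).toReal * φ x * 2^(n+1) * T ^ n * T := by
          rw [mul_pow, pow_succ]; ring
  calc φ (x*s) ≤ (Lover n α φ).toReal * φ x * 2^(n+1) * T ^ n := step
    _ ≤ (Lover n α φ).toReal * φ x * 2^(3*n) * T ^ n := by
        apply mul_le_mul_of_nonneg_right _ (pow_nonneg hT0.le n)
        apply mul_le_mul_of_nonneg_left _ (mul_nonneg hL0 hφx.le)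
        exact pow_le_pow_right₀ one_le_two (by omega)
    _ = 2 ^ (3 * n) * (Lover n α φ).toReal * φ x * s ^ (-(n : ℝ) / α) := by
        rw [hTn]; ring
end

section
/- Let n ≥ 2, Ω ⊂ ℝⁿ a domain, α ∈ (-n, 0), and φ a Young function. If u is a measurable function on Ω with finite Orlicz-Besov seminorm ‖u‖_{Ḃ^{α,φ}(Ω)}, then u is locally integrable on Ω. -/
open MeasureTheory Set Filter
open scoped ENNReal NNReal Topology

/-!
Put `s = |u x - u y| / (l ‖x - y‖^α)`. Convexity and `φ 0 = 0` give `s ≤ φ s / φ 1 + 1`, so on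
a ball `B` of radius `r`, `|u x - u y| ≤ C φ(s) / ‖x - y‖^(2n) + l ‖x - y‖^α` with
`C = l (2r)^(2n+α) / φ 1`.
The first term has finite integral over `B × B` by the Besov bound and the second because
`‖·‖^α` is locally integrable for `α > -n`. Hence `∫_B |u x₀ - u y| dy < ∞` for some `x₀`,
and `|u y| ≤ |u x₀ - u y| + |u x₀|` makes `u` integrable on `B`.
-/

open Metric Module

variable {φ : ℝ → ℝ}

lemma map_nonneg_of_map_zero_of_pos (hzero : φ 0 = 0) (hpos : ∀ t > 0, 0 < φ t) {s : ℝ}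
    (hs : 0 ≤ s) : 0 ≤ φ s :=
  hs.eq_or_lt.elim (fun h => h ▸ hzero.ge) fun h => (hpos s h).le

namespace ConvexOn

lemma mul_map_one_le_of_one_le (hconv : ConvexOn ℝ (Ici 0) φ) (hzero : φ 0 = 0) {s : ℝ}
    (hs : 1 ≤ s) : s * φ 1 ≤ φ s := by
  have hs0 : 0 < s := one_pos.trans_le hs
  have h := hconv.2 (mem_Ici.2 hs0.le) (mem_Ici.2 le_rfl) (inv_nonneg.2 hs0.le)
    (sub_nonneg.2 (inv_le_one_of_one_le₀ hs)) (add_sub_cancel _ _)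
  simp only [smul_eq_mul, mul_zero, add_zero, inv_mul_cancel₀ hs0.ne', hzero] at h
  rwa [le_inv_mul_iff₀ hs0] at h

lemma le_div_map_one_add_one (hconv : ConvexOn ℝ (Ici 0) φ) (hzero : φ 0 = 0)
    (hpos : ∀ t > 0, 0 < φ t) {s : ℝ} (hs : 0 ≤ s) : s ≤ φ s / φ 1 + 1 := by
  have hφ1 := hpos 1 one_pos
  rcases le_total s 1 with hs1 | hs1
  · have := div_nonneg (map_nonneg_of_map_zero_of_pos hzero hpos hs) hφ1.le
    linarith
  · have : s ≤ φ s / φ 1 := (le_div_iff₀ hφ1).2 (hconv.mul_map_one_le_of_one_le hzero hs1)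
    linarith

end ConvexOn

lemma le_mul_map_div_pow_add_rpow (hconv : ConvexOn ℝ (Ici 0) φ)
    (hzero : φ 0 = 0) (hpos : ∀ t > 0, 0 < φ t) {a l d D α : ℝ} {m : ℕ} (ha : 0 ≤ a)
    (hl : 0 < l) (hd : 0 < d) (hdD : d ≤ D) (hmα : 0 ≤ m + α) :
    a ≤ l / φ 1 * D ^ (m + α) * (φ (a / (l * d ^ α)) / d ^ m) + l * d ^ α := by
  set s := a / (l * d ^ α)
  have hφ1 := hpos 1 one_pos
  have hdα : 0 < l * d ^ α := mul_pos hl (Real.rpow_pos_of_pos hd α)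
  have hs : s ≤ φ s / φ 1 + 1 := hconv.le_div_map_one_add_one hzero hpos (by positivity)
  have hφs : 0 ≤ φ s / d ^ m :=
    div_nonneg (map_nonneg_of_map_zero_of_pos hzero hpos (by positivity)) (by positivity)
  have hpow : d ^ m * d ^ α ≤ D ^ (m + α) := by
    rw [← Real.rpow_natCast, ← Real.rpow_add hd]
    exact Real.rpow_le_rpow hd.le hdD hmα
  calc a = s * (l * d ^ α) := (div_mul_cancel₀ a hdα.ne').symm
    _ ≤ (φ s / φ 1 + 1) * (l * d ^ α) := mul_le_mul_of_nonneg_right hs hdα.le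
    _ = l / φ 1 * (d ^ m * d ^ α) * (φ s / d ^ m) + l * d ^ α := by
      field_simp
    _ ≤ l / φ 1 * D ^ (m + α) * (φ s / d ^ m) + l * d ^ α := by gcongr

lemma ofReal_abs_sub_le_of_mem_ball {E : Type*} [NormedAddCommGroup E]
    (hconv : ConvexOn ℝ (Ici 0) φ) (hzero : φ 0 = 0) (hpos : ∀ t > 0, 0 < φ t) {α : ℝ}
    {m : ℕ} (hmα : 0 ≤ m + α) {u : E → ℝ} {l : ℝ} (hl : 0 < l) {x y z : E} {r : ℝ}
    (hx : x ∈ ball z r) (hy : y ∈ ball z r) :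
    ENNReal.ofReal |u x - u y|
      ≤ ENNReal.ofReal (l / φ 1 * (2 * r) ^ (m + α))
          * ENNReal.ofReal (φ (|u x - u y| / (l * ‖x - y‖ ^ α)) / ‖x - y‖ ^ m)
        + ENNReal.ofReal l * ENNReal.ofReal (‖x - y‖ ^ α) := by
  rcases eq_or_ne x y with rfl | hxy
  · simp
  have hC : 0 ≤ l / φ 1 * (2 * r) ^ (m + α) := by
    have := (pos_of_mem_ball hx).le
    have := (hpos 1 one_pos).le
    positivity
  have hdist : ‖x - y‖ ≤ 2 * r := by
    rw [← dist_eq_norm]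
    linarith [dist_triangle_right x y z, mem_ball.1 hx, mem_ball.1 hy]
  rw [← ENNReal.ofReal_mul hC, ← ENNReal.ofReal_mul hl.le]
  refine (ENNReal.ofReal_le_ofReal ?_).trans ENNReal.ofReal_add_le
  exact le_mul_map_div_pow_add_rpow hconv hzero hpos (abs_nonneg _) hl
    (norm_pos_iff.2 (sub_ne_zero.2 hxy)) hdist hmα

lemma lintegral_ball_norm_sub_rpow_le {G : Type*} [NormedAddCommGroup G] [MeasurableSpace G]
    [BorelSpace G] {μ : Measure G} [μ.IsAddRightInvariant] {α : ℝ} {x z : G} {r : ℝ}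
    (hx : x ∈ ball z r) :
    ∫⁻ y in ball z r, ENNReal.ofReal (‖x - y‖ ^ α) ∂μ
      ≤ ∫⁻ w in ball 0 (2 * r), ENNReal.ofReal (‖w‖ ^ α) ∂μ := by
  let k : G → ℝ≥0∞ := (ball 0 (2 * r)).indicator fun w => ENNReal.ofReal (‖w‖ ^ α)
  calc ∫⁻ y in ball z r, ENNReal.ofReal (‖x - y‖ ^ α) ∂μ
      ≤ ∫⁻ y in ball z r, k (y - x) ∂μ := by
        refine setLIntegral_mono' measurableSet_ball fun y hy => ?_
        have hyx : y - x ∈ ball (0 : G) (2 * r) := by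
          rw [mem_ball_zero_iff, ← dist_eq_norm]
          linarith [dist_triangle_right y x z, mem_ball.1 hx, mem_ball.1 hy]
        simp only [k, indicator_of_mem hyx, norm_sub_rev, le_rfl]
    _ ≤ ∫⁻ y, k (y - x) ∂μ := setLIntegral_le_lintegral _ _
    _ = ∫⁻ w in ball 0 (2 * r), ENNReal.ofReal (‖w‖ ^ α) ∂μ := by
        rw [lintegral_sub_right_eq_self, lintegral_indicator measurableSet_ball]

lemma integrableOn_of_lintegral_lintegral_abs_sub_lt_top {X : Type*} [MeasurableSpace X]
    {μ : Measure X} [SFinite μ] {u : X → ℝ} (hu : Measurable u) {s : Set X} (hs₀ : μ s ≠ 0)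
    (hs : μ s ≠ ∞) (h : ∫⁻ x in s, ∫⁻ y in s, ENNReal.ofReal |u x - u y| ∂μ ∂μ < ∞) :
    IntegrableOn u s μ := by
  have hmeas : Measurable fun x => ∫⁻ y in s, ENNReal.ofReal |u x - u y| ∂μ :=
    Measurable.lintegral_prod_right'
      ((hu.comp measurable_fst).sub (hu.comp measurable_snd)).abs.ennreal_ofReal
  have : (ae (μ.restrict s)).NeBot := ae_neBot.2 (by rwa [Ne, Measure.restrict_eq_zero])
  obtain ⟨x₀, hx₀⟩ := (ae_lt_top hmeas h.ne).exists
  refine ⟨hu.aestronglyMeasurable, ?_⟩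
  rw [hasFiniteIntegral_iff_norm]
  calc ∫⁻ y in s, ENNReal.ofReal ‖u y‖ ∂μ
      ≤ ∫⁻ y in s, (ENNReal.ofReal |u x₀ - u y| + ENNReal.ofReal |u x₀|) ∂μ := by
        refine lintegral_mono fun y => ?_
        rw [← ENNReal.ofReal_add (abs_nonneg _) (abs_nonneg _)]
        refine ENNReal.ofReal_le_ofReal ?_
        linarith [Real.norm_eq_abs (u y), abs_sub_abs_le_abs_sub (u y) (u x₀),
          abs_sub_comm (u y) (u x₀)]
    _ = ∫⁻ y in s, ENNReal.ofReal |u x₀ - u y| ∂μ + ENNReal.ofReal |u x₀| * μ s := by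
        rw [lintegral_add_right _ measurable_const, setLIntegral_const]
    _ < ∞ := ENNReal.add_lt_top.2 ⟨hx₀, ENNReal.mul_lt_top ENNReal.ofReal_lt_top hs.lt_top⟩

section AddHaar

variable {E : Type*} [NormedAddCommGroup E] [NormedSpace ℝ E] [FiniteDimensional ℝ E]
  [MeasurableSpace E] [BorelSpace E] {μ : Measure E} [μ.IsAddHaarMeasure] {α : ℝ}

lemma lintegral_ball_zero_norm_rpow_lt_top (hd : 1 ≤ finrank ℝ E)
    (hα : -(finrank ℝ E : ℝ) < α) (R : ℝ) :
    ∫⁻ w in ball 0 R, ENNReal.ofReal (‖w‖ ^ α) ∂μ < ∞ := by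
  refine IntegrableOn.setLIntegral_lt_top
    (integrableOn_ball_of_norm_le_rpow (C := 1) (α := -α) hd (by linarith) ?_
      (measurable_norm.pow_const α).aestronglyMeasurable)
  refine ae_of_all _ fun w => ?_
  rw [neg_neg, one_mul, Real.norm_of_nonneg (Real.rpow_nonneg (norm_nonneg w) α)]

lemma lintegral_lintegral_ball_norm_sub_rpow_lt_top (hd : 1 ≤ finrank ℝ E)
    (hα : -(finrank ℝ E : ℝ) < α) (z : E) (r : ℝ) :
    ∫⁻ x in ball z r, ∫⁻ y in ball z r, ENNReal.ofReal (‖x - y‖ ^ α) ∂μ ∂μ < ∞ :=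
  calc ∫⁻ x in ball z r, ∫⁻ y in ball z r, ENNReal.ofReal (‖x - y‖ ^ α) ∂μ ∂μ
      ≤ ∫⁻ _ in ball z r, ∫⁻ w in ball 0 (2 * r), ENNReal.ofReal (‖w‖ ^ α) ∂μ ∂μ :=
        setLIntegral_mono' measurableSet_ball fun _ hx => lintegral_ball_norm_sub_rpow_le hx
    _ < ∞ := by
        rw [setLIntegral_const]
        exact ENNReal.mul_lt_top (lintegral_ball_zero_norm_rpow_lt_top hd hα _)
          measure_ball_lt_top

lemma lintegral_lintegral_abs_sub_lt_top_of_lintegral_besov (hconv : ConvexOn ℝ (Ici 0) φ)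
    (hzero : φ 0 = 0) (hpos : ∀ t > 0, 0 < φ t) {m : ℕ} (hd : 1 ≤ finrank ℝ E)
    (hα : -(finrank ℝ E : ℝ) < α) (hmα : 0 ≤ m + α) {u : E → ℝ} {l : ℝ} (hl : 0 < l)
    (z : E) (r : ℝ)
    (hI : ∫⁻ x in ball z r, ∫⁻ y in ball z r,
      ENNReal.ofReal (φ (|u x - u y| / (l * ‖x - y‖ ^ α)) / ‖x - y‖ ^ m) ∂μ ∂μ < ∞) :
    ∫⁻ x in ball z r, ∫⁻ y in ball z r, ENNReal.ofReal |u x - u y| ∂μ ∂μ < ∞ := by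
  set C := l / φ 1 * (2 * r) ^ (m + α)
  set F := fun x y => ENNReal.ofReal (φ (|u x - u y| / (l * ‖x - y‖ ^ α)) / ‖x - y‖ ^ m)
  set K := fun x y : E => ENNReal.ofReal (‖x - y‖ ^ α)
  have hKm : Measurable fun p : E × E => K p.1 p.2 :=
    ((measurable_fst.sub measurable_snd).norm.pow_const α).ennreal_ofReal
  have hKx (x : E) : Measurable (K x) := hKm.comp measurable_prodMk_left
  have hKint : Measurable fun x => ∫⁻ y in ball z r, K x y ∂μ := hKm.lintegral_prod_right'
  calc ∫⁻ x in ball z r, ∫⁻ y in ball z r, ENNReal.ofReal |u x - u y| ∂μ ∂μ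
      ≤ ∫⁻ x in ball z r, ∫⁻ y in ball z r,
          (ENNReal.ofReal C * F x y + ENNReal.ofReal l * K x y) ∂μ ∂μ :=
        setLIntegral_mono' measurableSet_ball fun _ hx => setLIntegral_mono' measurableSet_ball
          fun _ hy => ofReal_abs_sub_le_of_mem_ball hconv hzero hpos hmα hl hx hy
    _ = ∫⁻ x in ball z r, (ENNReal.ofReal C * ∫⁻ y in ball z r, F x y ∂μ
          + ENNReal.ofReal l * ∫⁻ y in ball z r, K x y ∂μ) ∂μ := by
        refine lintegral_congr fun x => ?_
        rw [lintegral_add_right' _ ((hKx x).const_mul _).aemeasurable,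
          lintegral_const_mul' _ _ ENNReal.ofReal_ne_top,
          lintegral_const_mul' _ _ ENNReal.ofReal_ne_top]
    _ = ENNReal.ofReal C * ∫⁻ x in ball z r, ∫⁻ y in ball z r, F x y ∂μ ∂μ
          + ENNReal.ofReal l * ∫⁻ x in ball z r, ∫⁻ y in ball z r, K x y ∂μ ∂μ := by
        rw [lintegral_add_right' _ (hKint.const_mul _).aemeasurable,
          lintegral_const_mul' _ _ ENNReal.ofReal_ne_top,
          lintegral_const_mul' _ _ ENNReal.ofReal_ne_top]
    _ < ∞ := ENNReal.add_lt_top.2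
        ⟨ENNReal.mul_lt_top ENNReal.ofReal_lt_top hI, ENNReal.mul_lt_top ENNReal.ofReal_lt_top
          (lintegral_lintegral_ball_norm_sub_rpow_lt_top hd hα z r)⟩

end AddHaar

theorem stmt8_general (n : ℕ) (hn : 2 ≤ n) (α : ℝ) (hα1 : -(n : ℝ) < α)
    (φ : ℝ → ℝ)
    (hconv : ConvexOn ℝ (Set.Ici 0) φ)
    (hzero : φ 0 = 0) (hpos : ∀ t > 0, 0 < φ t)
    (Ω : Set (EuclideanSpace ℝ (Fin n))) (hopen : IsOpen Ω)
    (u : EuclideanSpace ℝ (Fin n) → ℝ) (hu : Measurable u)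
    (hfin : (besovSet n α φ Ω u).Nonempty) :
    LocallyIntegrableOn u Ω := by
  obtain ⟨l, hl, hI⟩ := hfin
  intro z hz
  obtain ⟨r, hr, hrΩ⟩ := Metric.isOpen_iff.1 hopen z hz
  refine ⟨ball z r, nhdsWithin_le_nhds (ball_mem_nhds z hr), ?_⟩
  have hdim : finrank ℝ (EuclideanSpace ℝ (Fin n)) = n := finrank_euclideanSpace_fin
  have hIball := ((lintegral_mono_set hrΩ).trans
    (lintegral_mono fun _ => lintegral_mono_set hrΩ)).trans_lt (hI.trans_lt ENNReal.one_lt_top)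
  refine integrableOn_of_lintegral_lintegral_abs_sub_lt_top hu
    (measure_ball_pos _ z hr).ne' measure_ball_lt_top.ne ?_
  exact lintegral_lintegral_abs_sub_lt_top_of_lintegral_besov hconv hzero hpos
    (by omega) (by rwa [hdim]) (by push_cast; linarith) hl z r hIball

theorem stmt8 (n : ℕ) (hn : 2 ≤ n) (α : ℝ) (hα1 : -(n : ℝ) < α) (hα2 : α < 0)
    (φ : ℝ → ℝ)
    (hconv : ConvexOn ℝ (Set.Ici 0) φ) (hcont : ContinuousOn φ (Set.Ici 0))
    (hzero : φ 0 = 0) (hpos : ∀ t > 0, 0 < φ t)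
    (htop : Filter.Tendsto φ Filter.atTop Filter.atTop)
    (Ω : Set (EuclideanSpace ℝ (Fin n))) (hopen : IsOpen Ω) (hconn : IsConnected Ω)
    (u : EuclideanSpace ℝ (Fin n) → ℝ) (hu : Measurable u)
    (hfin : (besovSet n α φ Ω u).Nonempty) :
    LocallyIntegrableOn u Ω :=
  stmt8_general n hn α hα1 φ hconv hzero hpos Ω hopen u hu hfin
end

section
/- Let n ≥ 2, α ∈ (-n, 0), and φ a Young function satisfying Λ̲_φ(α) < ∞, and let Ω ⊂ ℝⁿ be a bounded domain. Then every u ∈ C_c^1(Ω) has finite Orlicz-Besov seminorm ‖u‖_{Ḃ^{α,φ}(Ω)} < ∞. -/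
open MeasureTheory Set Filter
open scoped ENNReal NNReal Topology

/-
Since `u` is Lipschitz with some constant `L`, at scale `λ = L / X` the integrand at distance
`r = ‖x - y‖` is at most `φ (r ^ (1 - α) * X) / r ^ (2 * n)`, by monotonicity of the Young function.
Integrating in polar coordinates around `x`, the inner integral is at most the area of the unit
sphere times `∫ r in (0, diam Ω], φ (r ^ (1 - α) * X) / r ^ (n + 1)`. On `(0, 1)` this is at most
`φ X * Λ̲_φ(α)`, on `[1, diam Ω]` at most `φ (diam Ω ^ (1 - α) * X) * (diam Ω - 1)`; both tend to
`0` as `X → 0⁺` because `φ` is continuous at `0` with `φ 0 = 0`, so a small `X` gives the bound `1`.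
-/

open Metric

theorem ConvexOn.monotoneOn_Ici_of_isMinOn_s9 {f : ℝ → ℝ} {a : ℝ}
    (hf : ConvexOn ℝ (Ici a) f) (hmin : IsMinOn f (Ici a) a) : MonotoneOn f (Ici a) := by
  intro s (hs : a ≤ s) t ht hst
  rcases hs.eq_or_lt with rfl | has
  · exact hmin ht
  rcases hst.eq_or_lt with rfl | hst
  · exact le_rfl
  refine hf.le_right_of_left_le self_mem_Ici ht ?_ (hmin hs)
  rw [openSegment_eq_Ioo (has.trans hst)]
  exact ⟨has, hst⟩

section Polar

variable {E : Type*} [NormedAddCommGroup E] [NormedSpace ℝ E] [MeasurableSpace E] [BorelSpace E]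
  [FiniteDimensional ℝ E] [Nontrivial E] (μ : Measure E) [μ.IsAddHaarMeasure]

theorem lintegral_fun_norm_addHaar {g : ℝ → ℝ≥0∞} (hg : Measurable g) :
    ∫⁻ x, g ‖x‖ ∂μ =
      μ.toSphere univ * ∫⁻ r in Ioi 0, ENNReal.ofReal (r ^ (Module.finrank ℝ E - 1)) * g r :=
  calc ∫⁻ x, g ‖x‖ ∂μ = ∫⁻ x : ({0}ᶜ : Set E), g ‖(x : E)‖ ∂μ.comap (↑) := by
        rw [lintegral_subtype_comap (measurableSet_singleton _).compl fun x ↦ g ‖x‖,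
          restrict_compl_singleton]
    _ = ∫⁻ p, g p.2 ∂μ.toSphere.prod (.volumeIoiPow (Module.finrank ℝ E - 1)) := by
        simpa using μ.measurePreserving_homeomorphUnitSphereProd.lintegral_comp_emb
          (Homeomorph.measurableEmbedding _) (g ∘ Subtype.val ∘ Prod.snd)
    _ = μ.toSphere univ * ∫⁻ r : Ioi (0 : ℝ), g r ∂.volumeIoiPow (Module.finrank ℝ E - 1) := by
        rw [lintegral_prod _ (by fun_prop)]
        simp [lintegral_const, mul_comm]
    _ = _ := by
        rw [Measure.volumeIoiPow,
          lintegral_withDensity_eq_lintegral_mul _ (by fun_prop) (by fun_prop)]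
        exact congrArg _
          (lintegral_subtype_comap measurableSet_Ioi fun r ↦ ENNReal.ofReal (r ^ _) * g r)

theorem lintegral_indicator_Iic_fun_norm_addHaar {g : ℝ → ℝ≥0∞} (hg : Measurable g) (R : ℝ) :
    ∫⁻ x, (Iic R).indicator g ‖x‖ ∂μ =
      μ.toSphere univ * ∫⁻ r in Ioc 0 R, ENNReal.ofReal (r ^ (Module.finrank ℝ E - 1)) * g r := by
  rw [lintegral_fun_norm_addHaar μ (hg.indicator measurableSet_Iic)]
  simp_rw [← indicator_mul_right _ (fun r ↦ ENNReal.ofReal (r ^ (Module.finrank ℝ E - 1))) g]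
  rw [lintegral_indicator measurableSet_Iic, Measure.restrict_restrict measurableSet_Iic,
    Iic_inter_Ioi]

end Polar

section Besov

variable {n : ℕ} {α : ℝ} {φ : ℝ → ℝ}

theorem MonotoneOn.map_abs_div_le_rpow_mul (hφ : MonotoneOn φ (Ici 0)) {a L X r : ℝ}
    (hL : 0 < L) (hX : 0 < X) (hr : 0 ≤ r) (ha : |a| ≤ L * r) :
    φ (|a| / (L / X * r ^ α)) ≤ φ (r ^ (1 - α) * X) := by
  refine hφ (by positivity : (0 : ℝ) ≤ _) (by positivity : (0 : ℝ) ≤ _) ?_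
  rcases hr.eq_or_lt with rfl | hr
  · simp [show a = 0 by simpa using ha]
    positivity
  have hrr : r ^ (1 - α) * r ^ α = r := by rw [← Real.rpow_add hr]; simp
  rw [div_le_iff₀ (by positivity)]
  calc |a| ≤ L * r := ha
    _ = L / X * X * (r ^ (1 - α) * r ^ α) := by rw [hrr, div_mul_cancel₀ L hX.ne']
    _ = r ^ (1 - α) * X * (L / X * r ^ α) := by ring

theorem lintegral_Ioc_le_Lunder (hφ : MonotoneOn φ (Ici 0)) (hα : α ≤ 1) {X : ℝ} (hX : 0 < X)
    (hφX : 0 < φ X) (D : ℝ) :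
    ∫⁻ r in Ioc 0 D, ENNReal.ofReal (φ (r ^ (1 - α) * X) / r ^ (n + 1)) ≤
      ENNReal.ofReal (φ X) * Lunder n α φ +
        ENNReal.ofReal (φ (D ^ (1 - α) * X)) * ENNReal.ofReal (D - 1) := by
  have hsmall : ∫⁻ r in Ioo 0 1, ENNReal.ofReal (φ (r ^ (1 - α) * X) / r ^ (n + 1)) ≤
      ENNReal.ofReal (φ X) * Lunder n α φ :=
    calc _ = ∫⁻ r in Ioo 0 1, ENNReal.ofReal (φ X) *
          ENNReal.ofReal (φ (r ^ (1 - α) * X) / (φ X * r ^ (n + 1))) := by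
          refine setLIntegral_congr_fun measurableSet_Ioo fun r hr ↦ ?_
          rw [← ENNReal.ofReal_mul hφX.le]
          field_simp [hr.1.ne']
      _ = ENNReal.ofReal (φ X) * ∫⁻ r in Ioo 0 1,
          ENNReal.ofReal (φ (r ^ (1 - α) * X) / (φ X * r ^ (n + 1))) :=
        lintegral_const_mul' _ _ ENNReal.ofReal_ne_top
      _ ≤ _ := by
        gcongr
        exact le_biSup (fun x ↦ ∫⁻ t in Ioo (0 : ℝ) 1,
          ENNReal.ofReal (φ (t ^ (1 - α) * x) / (φ x * t ^ (n + 1)))) hX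
  have hlarge : ∫⁻ r in Icc 1 D, ENNReal.ofReal (φ (r ^ (1 - α) * X) / r ^ (n + 1)) ≤
      ENNReal.ofReal (φ (D ^ (1 - α) * X)) * ENNReal.ofReal (D - 1) :=
    calc _ ≤ ∫⁻ _ in Icc 1 D, ENNReal.ofReal (φ (D ^ (1 - α) * X)) := by
          refine setLIntegral_mono measurable_const fun r ⟨hr1, hrD⟩ ↦ ?_
          have hX_le : X ≤ r ^ (1 - α) * X :=
            le_mul_of_one_le_left hX.le (Real.one_le_rpow hr1 (by linarith))
          have hr0 : 0 ≤ r := by linarith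
          have hr_le_D : r ^ (1 - α) * X ≤ D ^ (1 - α) * X := by gcongr
          have hle_D : φ (r ^ (1 - α) * X) ≤ φ (D ^ (1 - α) * X) :=
            hφ (hX.le.trans hX_le) (hX.le.trans (hX_le.trans hr_le_D)) hr_le_D
          refine ENNReal.ofReal_le_ofReal ((div_le_self ?_ (one_le_pow₀ hr1)).trans hle_D)
          exact hφX.le.trans (hφ hX.le (hX.le.trans hX_le) hX_le)
      _ = _ := by rw [setLIntegral_const, Real.volume_Icc]
  calc _ ≤ ∫⁻ r in Ioo 0 1 ∪ Icc 1 D, ENNReal.ofReal (φ (r ^ (1 - α) * X) / r ^ (n + 1)) :=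
        lintegral_mono_set fun r (hr : r ∈ Ioc 0 D) ↦
          (lt_or_ge r 1).elim (fun h ↦ .inl ⟨hr.1, h⟩) (fun h ↦ .inr ⟨h, hr.2⟩)
    _ ≤ _ := (lintegral_union_le _ _ _).trans (add_le_add hsmall hlarge)

theorem tendsto_lintegral_Ioc_nhdsGT_zero (hφ : MonotoneOn φ (Ici 0))
    (hpos : ∀ t > 0, 0 < φ t) (hcont : ContinuousWithinAt φ (Ici 0) 0) (hzero : φ 0 = 0)
    (hα : α ≤ 1) (hL : Lunder n α φ ≠ ⊤) {D : ℝ} (hD : 0 ≤ D) :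
    Tendsto (fun X ↦ ∫⁻ r in Ioc 0 D, ENNReal.ofReal (φ (r ^ (1 - α) * X) / r ^ (n + 1)))
      (𝓝[>] 0) (𝓝 0) := by
  have hφ_scaled : ∀ c ≥ (0 : ℝ), Tendsto (fun X ↦ ENNReal.ofReal (φ (c * X))) (𝓝[>] 0) (𝓝 0) := by
    intro c hc
    have hcX : Tendsto (c * ·) (𝓝[>] 0) (𝓝[Ici 0] 0) := by
      refine tendsto_nhdsWithin_iff.2 ⟨?_, eventually_nhdsWithin_of_forall fun X hX ↦ ?_⟩
      · exact ((continuous_const_mul c).tendsto' 0 0 (mul_zero c)).mono_left nhdsWithin_le_nhds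
      · exact mul_nonneg hc (le_of_lt hX)
    simpa [hzero] using ENNReal.tendsto_ofReal (hcont.tendsto.comp hcX)
  have hbound := (ENNReal.Tendsto.mul_const (hφ_scaled 1 zero_le_one) (.inr hL)).add
    (ENNReal.Tendsto.mul_const (hφ_scaled _ (Real.rpow_nonneg hD (1 - α)))
      (.inr (ENNReal.ofReal_ne_top (r := D - 1))))
  simp only [one_mul, zero_mul, add_zero] at hbound
  refine tendsto_of_tendsto_of_tendsto_of_le_of_le' tendsto_const_nhds hbound
    (.of_forall fun _ ↦ zero_le) ?_
  filter_upwards [self_mem_nhdsWithin] with X (hX : 0 < X)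
  exact lintegral_Ioc_le_Lunder hφ hα hX (hpos X hX) D

theorem lintegral_besov_le (hn : 1 ≤ n) (hφ : MonotoneOn φ (Ici 0))
    (hcont : ContinuousOn φ (Ici 0)) (hα : α ≤ 1) {Ω : Set (EuclideanSpace ℝ (Fin n))}
    {u : EuclideanSpace ℝ (Fin n) → ℝ} {L X D : ℝ} (hL : 0 < L) (hX : 0 < X)
    (hu : ∀ x y, |u x - u y| ≤ L * ‖x - y‖) (hΩ : ∀ x ∈ Ω, ∀ y ∈ Ω, ‖x - y‖ ≤ D) :
    ∫⁻ x in Ω, ∫⁻ y in Ω,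
        ENNReal.ofReal (φ (|u x - u y| / (L / X * ‖x - y‖ ^ α)) / ‖x - y‖ ^ (2 * n)) ≤
      (volume : Measure (EuclideanSpace ℝ (Fin n))).toSphere univ *
        (∫⁻ r in Ioc 0 D, ENNReal.ofReal (φ (r ^ (1 - α) * X) / r ^ (n + 1))) * volume Ω := by
  have : NeZero n := ⟨by omega⟩
  -- `|r|` makes the radial profile continuous on all of `ℝ`; only `r = ‖x - y‖ ≥ 0` matters.
  set g : ℝ → ℝ≥0∞ := fun r ↦ ENNReal.ofReal (φ (|r| ^ (1 - α) * X) / r ^ (2 * n))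
  have hg : Measurable g := by
    have : Continuous fun r : ℝ ↦ φ (|r| ^ (1 - α) * X) :=
      hcont.comp_continuous ((continuous_abs.rpow_const fun _ ↦ .inr (by linarith)).mul
        continuous_const) fun r ↦ mem_Ici.2 (by positivity)
    exact (this.measurable.div (by fun_prop)).ennreal_ofReal
  refine (setLIntegral_mono measurable_const fun x hx ↦ ?_).trans_eq (setLIntegral_const _ _)
  calc ∫⁻ y in Ω, ENNReal.ofReal (φ (|u x - u y| / (L / X * ‖x - y‖ ^ α)) / ‖x - y‖ ^ (2 * n))
      ≤ ∫⁻ y in Ω, (Iic D).indicator g ‖x - y‖ := by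
        refine setLIntegral_mono ((hg.indicator measurableSet_Iic).comp (by fun_prop))
          fun y hy ↦ ?_
        rw [indicator_of_mem (mem_Iic.2 (hΩ x hx y hy)) g]
        simp only [g, abs_norm]
        gcongr
        exact hφ.map_abs_div_le_rpow_mul hL hX (norm_nonneg _) (hu x y)
    _ ≤ ∫⁻ y, (Iic D).indicator g ‖x - y‖ := setLIntegral_le_lintegral _ _
    _ = ∫⁻ z, (Iic D).indicator g ‖z‖ :=
        lintegral_sub_left_eq_self (fun z ↦ (Iic D).indicator g ‖z‖) x
    _ = _ := by
        rw [lintegral_indicator_Iic_fun_norm_addHaar _ hg, finrank_euclideanSpace_fin]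
        refine congrArg _ (setLIntegral_congr_fun measurableSet_Ioc fun r ⟨hr, _⟩ ↦ ?_)
        rw [← ENNReal.ofReal_mul (by positivity), abs_of_pos hr, mul_div_assoc']
        congr 1
        rw [div_eq_div_iff (by positivity) (by positivity),
          show 2 * n = n - 1 + (n + 1) by omega, pow_add]
        ring

end Besov

theorem stmt9_general (n : ℕ) (hn : 2 ≤ n) (α : ℝ) (hα2 : α < 0)
    (φ : ℝ → ℝ)
    (hconv : ConvexOn ℝ (Set.Ici 0) φ) (hcont : ContinuousOn φ (Set.Ici 0))
    (hzero : φ 0 = 0) (hpos : ∀ t > 0, 0 < φ t)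
    (hL1 : Lunder n α φ < ⊤)
    (Ω : Set (EuclideanSpace ℝ (Fin n)))
    (hbd : Bornology.IsBounded Ω)
    (u : EuclideanSpace ℝ (Fin n) → ℝ) (hu : ContDiff ℝ 1 u)
    (hsupp : HasCompactSupport u) :
    (besovSet n α φ Ω u).Nonempty := by
  have hφ : MonotoneOn φ (Ici 0) := hconv.monotoneOn_Ici_of_isMinOn_s9 fun t (ht : 0 ≤ t) ↦ by
    show φ 0 ≤ φ t
    rcases ht.eq_or_lt with rfl | ht
    exacts [le_rfl, hzero.symm ▸ (hpos t ht).le]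
  obtain ⟨C, hC⟩ := hu.lipschitzWith_of_hasCompactSupport hsupp one_ne_zero
  have hlip : ∀ x y, |u x - u y| ≤ (C + 1) * ‖x - y‖ := fun x y ↦ by
    simpa [Real.dist_eq, dist_eq_norm] using
      (hC.dist_le_mul x y).trans (mul_le_mul_of_nonneg_right (by simp) dist_nonneg)
  have hdiam : ∀ x ∈ Ω, ∀ y ∈ Ω, ‖x - y‖ ≤ diam Ω := fun x hx y hy ↦ by
    simpa [dist_eq_norm] using dist_le_diam_of_mem hbd hx hy
  have hσ : (volume : Measure (EuclideanSpace ℝ (Fin n))).toSphere univ ≠ ⊤ := measure_ne_top _ _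
  have hΩ : volume Ω ≠ ⊤ := hbd.measure_lt_top.ne
  have hsmall := ENNReal.Tendsto.mul_const (ENNReal.Tendsto.const_mul
    (tendsto_lintegral_Ioc_nhdsGT_zero (n := n) (D := diam Ω) hφ hpos (hcont 0 self_mem_Ici) hzero
      (by linarith) hL1.ne diam_nonneg) (.inr hσ)) (.inr hΩ)
  rw [mul_zero, zero_mul] at hsmall
  obtain ⟨X, hX1, hX⟩ := ((hsmall.eventually_lt_const zero_lt_one).and self_mem_nhdsWithin).exists
  exact ⟨(C + 1) / X, by positivity, (lintegral_besov_le (by omega) hφ hcont (by linarith)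
    (by positivity) hX hlip hdiam).trans hX1.le⟩

theorem stmt9 (n : ℕ) (hn : 2 ≤ n) (α : ℝ) (hα1 : -(n : ℝ) < α) (hα2 : α < 0)
    (φ : ℝ → ℝ)
    (hconv : ConvexOn ℝ (Set.Ici 0) φ) (hcont : ContinuousOn φ (Set.Ici 0))
    (hzero : φ 0 = 0) (hpos : ∀ t > 0, 0 < φ t)
    (htop : Filter.Tendsto φ Filter.atTop Filter.atTop)
    (hL1 : Lunder n α φ < ⊤)
    (Ω : Set (EuclideanSpace ℝ (Fin n))) (hopen : IsOpen Ω) (hconn : IsConnected Ω)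
    (hbd : Bornology.IsBounded Ω)
    (u : EuclideanSpace ℝ (Fin n) → ℝ) (hu : ContDiff ℝ 1 u)
    (hsupp : HasCompactSupport u) (hsub : tsupport u ⊆ Ω) :
    (besovSet n α φ Ω u).Nonempty :=
  stmt9_general n hn α hα2 φ hconv hcont hzero hpos hL1 Ω hbd u hu hsupp
end

section
/- Let n ≥ 2, α ∈ (-n, 0), φ(t) = t^{n/|α|}, and Ω ⊆ ℝⁿ an unbounded globally n-regular domain with constant θ ∈ (0,1). Then for every nonzero u ∈ C_c^1(Ω), the Orlicz-Besov seminorm ‖u‖_{Ḃ^{α,φ}(Ω)} is infinite; i.e., for every λ > 0, ∫_Ω ∫_Ω φ(|u(x)-u(y)|/(λ|x-y|^α)) dx dy/|x-y|^{2n} = ∞. -/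
/-!
Fix x with u x ≠ 0. Outside a ball B(x, R) containing the support of u, the integrand in y is
(|u x| / l) ^ (n/|α|) · |x - y|⁻ⁿ, since the exponent n/|α| turns |x - y|^(-α) into |x - y|ⁿ.
By global n-regularity, for M large every annulus B(x, Mρ) \ B(x, ρ) meets Ω in measure
≳ ρⁿ, so each of the annuli with radii R Mᵏ contributes the same positive amount to
∫ |x - y|⁻ⁿ over Ω. Hence the inner integral is infinite on the open set {u ≠ 0}, which has
positive measure.
-/

open MeasureTheory Set Filter
open scoped ENNReal NNReal Topology

open Metric Module

section AhlforsRegular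

variable {X : Type*} [PseudoMetricSpace X] [MeasurableSpace X] [OpensMeasurableSpace X]
  {ν : Measure X} {x : X} {d : ℕ} {C θ : ℝ}

theorem ofReal_le_setLIntegral_annulus_inv_dist_pow (hC : 0 ≤ C) {ρ M : ℝ} (hρ : 0 < ρ)
    (hM : 0 < M) (hupper : ν (ball x ρ) ≤ ENNReal.ofReal (C * ρ ^ d))
    (hlower : ENNReal.ofReal (θ * (M * ρ) ^ d) ≤ ν (ball x (M * ρ))) :
    ENNReal.ofReal (θ - C / M ^ d) ≤
      ∫⁻ y in (dist x ·) ⁻¹' Ico ρ (M * ρ), ENNReal.ofReal ((dist x y ^ d)⁻¹) ∂ν := by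
  have hdiff_sub : ball x (M * ρ) \ ball x ρ ⊆ (dist x ·) ⁻¹' Ico ρ (M * ρ) :=
    fun y ⟨hy, hy'⟩ ↦ ⟨by simpa [dist_comm] using hy', by simpa [dist_comm] using hy⟩
  calc ENNReal.ofReal (θ - C / M ^ d)
      = ENNReal.ofReal (((M * ρ) ^ d)⁻¹) * ENNReal.ofReal (θ * (M * ρ) ^ d - C * ρ ^ d) := by
        rw [← ENNReal.ofReal_mul (by positivity)]
        congr 1
        field_simp
        ring
    _ ≤ ENNReal.ofReal (((M * ρ) ^ d)⁻¹) * ν ((dist x ·) ⁻¹' Ico ρ (M * ρ)) := by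
        gcongr
        calc ENNReal.ofReal (θ * (M * ρ) ^ d - C * ρ ^ d)
            = ENNReal.ofReal (θ * (M * ρ) ^ d) - ENNReal.ofReal (C * ρ ^ d) :=
              ENNReal.ofReal_sub _ (by positivity)
          _ ≤ ν (ball x (M * ρ)) - ν (ball x ρ) := tsub_le_tsub hlower hupper
          _ ≤ ν (ball x (M * ρ) \ ball x ρ) := le_measure_sdiff
          _ ≤ ν ((dist x ·) ⁻¹' Ico ρ (M * ρ)) := measure_mono hdiff_sub
    _ = ∫⁻ _ in (dist x ·) ⁻¹' Ico ρ (M * ρ), ENNReal.ofReal (((M * ρ) ^ d)⁻¹) ∂ν :=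
        (setLIntegral_const _ _).symm
    _ ≤ _ := by
        refine setLIntegral_mono' (measurableSet_Ico.preimage (by fun_prop)) fun y hy ↦ ?_
        exact ENNReal.ofReal_le_ofReal <| inv_anti₀ (pow_pos (hρ.trans_le hy.1) d) <|
          pow_le_pow_left₀ (hρ.le.trans hy.1) hy.2.le d

theorem lintegral_compl_ball_inv_dist_pow_eq_top (hd : d ≠ 0) (hC : 0 ≤ C) (hθ : 0 < θ)
    (hupper : ∀ r, 0 < r → ν (ball x r) ≤ ENNReal.ofReal (C * r ^ d))
    (hlower : ∀ r, 0 < r → ENNReal.ofReal (θ * r ^ d) ≤ ν (ball x r)) {R : ℝ} (hR : 0 < R) :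
    ∫⁻ y in (ball x R)ᶜ, ENNReal.ofReal ((dist x y ^ d)⁻¹) ∂ν = ⊤ := by
  -- any `M ≥ 1` with `C < θ * M ^ d` works
  set M := C / θ + 2
  have hM : 1 ≤ M := by linarith [div_nonneg hC hθ.le]
  have hκ : 0 < θ - C / M ^ d := by
    have hMd : C / θ < M ^ d := (by linarith : C / θ < M).trans_le (le_self_pow₀ hM hd)
    rw [sub_pos, div_lt_iff₀ (by positivity)]
    rwa [div_lt_iff₀ hθ, mul_comm] at hMd
  set ρ : ℕ → ℝ := fun k ↦ M ^ k * R
  have hρ : Monotone ρ := fun _ _ hjk ↦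
    mul_le_mul_of_nonneg_right (pow_le_pow_right₀ hM hjk) hR.le
  set annulus : ℕ → Set X := fun k ↦ (dist x ·) ⁻¹' Ico (ρ k) (ρ (k + 1))
  have hdisj : Pairwise (Function.onFun Disjoint annulus) := fun j k hjk ↦ by
    simpa only [Order.succ_eq_add_one] using (hρ.pairwise_disjoint_on_Ico_succ hjk).preimage _
  have hsub : (⋃ k, annulus k) ⊆ (ball x R)ᶜ := iUnion_subset fun k y hy ↦ by
    have : R ≤ ρ k := le_mul_of_one_le_left hR.le (one_le_pow₀ hM)
    simpa [dist_comm] using this.trans hy.1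
  have hannulus : ∀ k, ENNReal.ofReal (θ - C / M ^ d) ≤
      ∫⁻ y in annulus k, ENNReal.ofReal ((dist x y ^ d)⁻¹) ∂ν := fun k ↦ by
    have hρk : 0 < ρ k := by positivity
    have hMρ : ρ (k + 1) = M * ρ k := by simp only [ρ, pow_succ']; ring
    simp only [annulus, hMρ]
    exact ofReal_le_setLIntegral_annulus_inv_dist_pow hC hρk (by positivity) (hupper _ hρk)
      (hlower _ (by positivity))
  refine eq_top_iff.2 ?_
  calc (⊤ : ℝ≥0∞) = ∑' _ : ℕ, ENNReal.ofReal (θ - C / M ^ d) :=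
        (ENNReal.tsum_const_eq_top_of_ne_zero (ENNReal.ofReal_pos.2 hκ).ne').symm
    _ ≤ ∑' k, ∫⁻ y in annulus k, ENNReal.ofReal ((dist x y ^ d)⁻¹) ∂ν :=
        ENNReal.tsum_le_tsum hannulus
    _ = ∫⁻ y in ⋃ k, annulus k, ENNReal.ofReal ((dist x y ^ d)⁻¹) ∂ν :=
        (lintegral_iUnion (fun k ↦ measurableSet_Ico.preimage (by fun_prop)) hdisj _).symm
    _ ≤ _ := lintegral_mono_set hsub

end AhlforsRegular

theorem lintegral_compl_ball_inv_dist_pow_finrank_eq_top {E : Type*} [NormedAddCommGroup E]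
    [NormedSpace ℝ E] [FiniteDimensional ℝ E] [Nontrivial E] [MeasurableSpace E] [BorelSpace E]
    (μ : Measure E) [μ.IsAddHaarMeasure] {s : Set E} {x : E} {θ : ℝ} (hθ : 0 < θ)
    (hreg : ∀ r, 0 < r → ENNReal.ofReal (θ * r ^ finrank ℝ E) ≤ μ (ball x r ∩ s))
    {R : ℝ} (hR : 0 < R) :
    ∫⁻ y in (ball x R)ᶜ, ENNReal.ofReal ((dist x y ^ finrank ℝ E)⁻¹) ∂μ.restrict s = ⊤ := by
  refine lintegral_compl_ball_inv_dist_pow_eq_top finrank_pos.ne'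
    (ENNReal.toReal_nonneg (a := μ (ball 0 1))) hθ
    (fun r hr ↦ ?_) (fun r hr ↦ ?_) hR <;> rw [Measure.restrict_apply measurableSet_ball]
  · rw [mul_comm, ENNReal.ofReal_mul (by positivity),
      ENNReal.ofReal_toReal measure_ball_lt_top.ne, ← μ.addHaar_ball x hr.le]
    exact measure_mono inter_subset_left
  · exact hreg r hr

theorem div_mul_rpow_rpow_div_pow_two_mul {α c l r : ℝ} (n : ℕ) (hα : α < 0) (hc : 0 ≤ c)
    (hl : 0 < l) (hr : 0 < r) :
    (c / (l * r ^ α)) ^ ((n : ℝ) / |α|) / r ^ (2 * n) = (c / l) ^ ((n : ℝ) / |α|) * (r ^ n)⁻¹ := by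
  have hexp : -α * ((n : ℝ) / |α|) = n := by
    rw [abs_of_neg hα, mul_div_cancel₀ _ (neg_ne_zero.2 hα.ne)]
  rw [div_mul_eq_div_div, div_eq_mul_inv _ (r ^ α), ← Real.rpow_neg hr.le,
    Real.mul_rpow (by positivity) (by positivity), ← Real.rpow_mul hr.le, hexp,
    Real.rpow_natCast, two_mul, pow_add]
  field_simp

theorem lintegral_besov_integrand_eq_top {n : ℕ} [NeZero n] {α : ℝ} (hα : α < 0)
    {Ω : Set (EuclideanSpace ℝ (Fin n))} {θ : ℝ} (hθ : 0 < θ) {x : EuclideanSpace ℝ (Fin n)}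
    (hreg : ∀ r : ℝ, 0 < r → ENNReal.ofReal (θ * r ^ n) ≤ volume (ball x r ∩ Ω))
    {u : EuclideanSpace ℝ (Fin n) → ℝ} (hsupp : Bornology.IsBounded (Function.support u))
    (hux : u x ≠ 0) {l : ℝ} (hl : 0 < l) :
    ∫⁻ y in Ω, ENNReal.ofReal ((|u x - u y| / (l * ‖x - y‖ ^ α)) ^ ((n : ℝ) / |α|)
      / ‖x - y‖ ^ (2 * n)) = ⊤ := by
  obtain ⟨R, hR, hsuppR⟩ := hsupp.subset_ball_lt 0 x
  set A := (|u x| / l) ^ ((n : ℝ) / |α|)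
  have hA : 0 < A := Real.rpow_pos_of_pos (div_pos (abs_pos.2 hux) hl) _
  have hfar : ∀ y ∈ (ball x R)ᶜ, ENNReal.ofReal A * ENNReal.ofReal ((dist x y ^ n)⁻¹) =
      ENNReal.ofReal ((|u x - u y| / (l * ‖x - y‖ ^ α)) ^ ((n : ℝ) / |α|)
        / ‖x - y‖ ^ (2 * n)) := fun y hy ↦ by
    have huy : u y = 0 := Function.notMem_support.1 fun h ↦ hy (hsuppR h)
    have hxy : 0 < dist x y := hR.trans_le (by simpa [dist_comm] using hy)
    rw [← dist_eq_norm, huy, sub_zero,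
      div_mul_rpow_rpow_div_pow_two_mul n hα (abs_nonneg _) hl hxy, ENNReal.ofReal_mul hA.le]
  have hfar_integral : ∫⁻ y in (ball x R)ᶜ, ENNReal.ofReal ((dist x y ^ n)⁻¹)
      ∂volume.restrict Ω = ⊤ := by
    simpa only [finrank_euclideanSpace_fin] using
      lintegral_compl_ball_inv_dist_pow_finrank_eq_top volume (s := Ω) (x := x) hθ
        (by simpa only [finrank_euclideanSpace_fin] using hreg) hR
  refine eq_top_iff.2 ?_
  calc ⊤ = ENNReal.ofReal A * ∫⁻ y in (ball x R)ᶜ,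
        ENNReal.ofReal ((dist x y ^ n)⁻¹) ∂volume.restrict Ω := by
        rw [hfar_integral, ENNReal.mul_top (ENNReal.ofReal_pos.2 hA).ne']
    _ = ∫⁻ y in (ball x R)ᶜ, ENNReal.ofReal A * ENNReal.ofReal ((dist x y ^ n)⁻¹)
        ∂volume.restrict Ω := (lintegral_const_mul' _ _ ENNReal.ofReal_ne_top).symm
    _ = _ := setLIntegral_congr_fun measurableSet_ball.compl hfar
    _ ≤ _ := setLIntegral_le_lintegral _ _

theorem stmt11_general (n : ℕ) (α : ℝ) (hα1 : -(n : ℝ) < α) (hα2 : α < 0)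
    (Ω : Set (EuclideanSpace ℝ (Fin n))) (θ : ℝ) (hθ : θ ∈ Set.Ioo (0:ℝ) 1)
    (hreg : ∀ x ∈ Ω, ∀ r : ℝ, 0 < r →
      ENNReal.ofReal (θ * r ^ n) ≤ volume (Metric.ball x r ∩ Ω))
    (u : EuclideanSpace ℝ (Fin n) → ℝ) (hu : ContDiff ℝ 1 u)
    (hsupp : HasCompactSupport u) (hsub : tsupport u ⊆ Ω) (hne : u ≠ 0) :
    ∀ l : ℝ, 0 < l →
      (∫⁻ x in Ω, ∫⁻ y in Ω,
        ENNReal.ofReal ((|u x - u y| / (l * ‖x - y‖ ^ α)) ^ ((n : ℝ) / |α|)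
          / ‖x - y‖ ^ (2 * n))) = ⊤ := by
  intro l hl
  have : NeZero n := ⟨by exact_mod_cast (by linarith : (0 : ℝ) < n).ne'⟩
  have hopen : IsOpen (Function.support u) := hu.continuous.isOpen_support
  have hsupport : Function.support u ⊆ Ω := (subset_tsupport u).trans hsub
  have hpos : volume (Function.support u) ≠ 0 :=
    (hopen.measure_pos volume (Function.support_nonempty_iff.2 hne)).ne'
  refine eq_top_iff.2 ?_
  calc ⊤ = ∫⁻ _ in Function.support u, ⊤ := by rw [setLIntegral_const, ENNReal.top_mul hpos]
    _ = ∫⁻ x in Function.support u, ∫⁻ y in Ω,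
          ENNReal.ofReal ((|u x - u y| / (l * ‖x - y‖ ^ α)) ^ ((n : ℝ) / |α|)
            / ‖x - y‖ ^ (2 * n)) :=
        setLIntegral_congr_fun hopen.measurableSet fun x hx ↦
          (lintegral_besov_integrand_eq_top hα2 hθ.1 (hreg x (hsupport hx))
            (hsupp.isBounded.subset (subset_tsupport u)) hx hl).symm
    _ ≤ _ := lintegral_mono_set hsupport

theorem stmt11 (n : ℕ) (hn : 2 ≤ n) (α : ℝ) (hα1 : -(n : ℝ) < α) (hα2 : α < 0)
    (Ω : Set (EuclideanSpace ℝ (Fin n))) (hopen : IsOpen Ω) (hconn : IsConnected Ω)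
    (hunbd : ¬ Bornology.IsBounded Ω) (θ : ℝ) (hθ : θ ∈ Set.Ioo (0:ℝ) 1)
    (hreg : ∀ x ∈ Ω, ∀ r : ℝ, 0 < r →
      ENNReal.ofReal (θ * r ^ n) ≤ volume (Metric.ball x r ∩ Ω))
    (u : EuclideanSpace ℝ (Fin n) → ℝ) (hu : ContDiff ℝ 1 u)
    (hsupp : HasCompactSupport u) (hsub : tsupport u ⊆ Ω) (hne : u ≠ 0) :
    ∀ l : ℝ, 0 < l →
      (∫⁻ x in Ω, ∫⁻ y in Ω,
        ENNReal.ofReal ((|u x - u y| / (l * ‖x - y‖ ^ α)) ^ ((n : ℝ) / |α|)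
          / ‖x - y‖ ^ (2 * n))) = ⊤ :=
  stmt11_general n α hα1 hα2 Ω θ hθ hreg u hu hsupp hsub hne
end

section
/- Let n ≥ 2 and Ω ⊆ ℝⁿ be a globally n-regular domain with constant θ ∈ (0,1), and set κ = (2ω_n/θ)^{1/n} + 2 where ω_n = |B(0,1)|. Then for every z ∈ Ω and 0 < s < (2/κ) diam Ω, the set Ω ∩ (B(z, κs) \ B(z, s)) is nonempty. -/
open MeasureTheory Set Filter
open scoped ENNReal NNReal Topology

/-! If `Ω` missed the annulus, `Ω ∩ B(z, κs)` would lie in `B(z, s)`, of volume `ω_n sⁿ`; but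
regularity gives it volume at least `θ (κs)ⁿ`, and `θ κⁿ > 2 ω_n` by the choice of `κ`. -/

theorem nonempty_inter_diff_of_measure_lt {α : Type*} [MeasurableSpace α] {μ : Measure α}
    {A B C : Set α} (h : μ B < μ (C ∩ A)) : (A ∩ (C \ B)).Nonempty := by
  by_contra hempty
  refine (measure_mono fun x hx => ?_).not_gt h
  by_contra hxB
  exact hempty ⟨x, hx.2, hx.1, hxB⟩

theorem Real.lt_pow_of_rpow_one_div_lt {a κ : ℝ} {n : ℕ} (hn : n ≠ 0) (ha : 0 ≤ a)
    (h : a ^ ((1 : ℝ) / n) < κ) : a < κ ^ n := by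
  have hκ : 0 ≤ κ := (Real.rpow_nonneg ha _).trans h.le
  rwa [one_div, Real.rpow_inv_lt_iff_of_pos ha hκ (Nat.cast_pos.mpr (Nat.pos_of_ne_zero hn)),
    Real.rpow_natCast] at h

theorem addHaar_ball_lt_ofReal_mul_pow {E : Type*} [NormedAddCommGroup E] [NormedSpace ℝ E]
    [MeasurableSpace E] [BorelSpace E] [FiniteDimensional ℝ E] (μ : Measure E)
    [μ.IsAddHaarMeasure] {θ κ s : ℝ} (hθ : 0 < θ) (hs : 0 < s) (z : E)
    (hκ : (μ (Metric.ball 0 1)).toReal / θ < κ ^ Module.finrank ℝ E) :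
    μ (Metric.ball z s) < ENNReal.ofReal (θ * (κ * s) ^ Module.finrank ℝ E) := by
  set d := Module.finrank ℝ E
  set ω := (μ (Metric.ball (0 : E) 1)).toReal
  have hsd : 0 < s ^ d := by positivity
  have hball : μ (Metric.ball z s) = ENNReal.ofReal (s ^ d * ω) := by
    rw [Measure.addHaar_ball_of_pos μ z hs, ENNReal.ofReal_mul hsd.le,
      ENNReal.ofReal_toReal measure_ball_lt_top.ne]
  have hω : ω < θ * κ ^ d := by rwa [div_lt_iff₀' hθ] at hκ
  have hlt : s ^ d * ω < θ * (κ * s) ^ d := by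
    rw [mul_pow, ← mul_assoc, mul_comm (s ^ d)]
    exact mul_lt_mul_of_pos_right hω hsd
  rw [hball]
  exact (ENNReal.ofReal_lt_ofReal_iff_of_nonneg (by positivity)).mpr hlt

theorem stmt12_general (n : ℕ) (hn : 2 ≤ n)
    (Ω : Set (EuclideanSpace ℝ (Fin n)))
    (θ : ℝ) (hθ : θ ∈ Set.Ioo (0:ℝ) 1)
    (hreg : ∀ x ∈ Ω, ∀ r : ℝ, 0 < r → ENNReal.ofReal r < 2 * EMetric.diam Ω →
      ENNReal.ofReal (θ * r ^ n) ≤ volume (Metric.ball x r ∩ Ω))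
    (κ : ℝ)
    (hκ : κ = (2 * (volume (Metric.ball (0 : EuclideanSpace ℝ (Fin n)) 1)).toReal / θ)
      ^ ((1 : ℝ) / n) + 2)
    (z : EuclideanSpace ℝ (Fin n)) (hz : z ∈ Ω) (s : ℝ) (hs : 0 < s)
    (hs2 : ENNReal.ofReal (κ * s / 2) < EMetric.diam Ω) :
    (Ω ∩ (Metric.ball z (κ * s) \ Metric.ball z s)).Nonempty := by
  set ω := (volume (Metric.ball (0 : EuclideanSpace ℝ (Fin n)) 1)).toReal
  have hθ0 : 0 < θ := hθ.1
  have hω : 0 ≤ ω := ENNReal.toReal_nonneg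
  have hroot : 0 ≤ (2 * ω / θ) ^ ((1 : ℝ) / n) := Real.rpow_nonneg (by positivity) _
  have hκpow : ω / θ < κ ^ n :=
    calc ω / θ ≤ 2 * ω / θ := by gcongr; linarith
      _ < κ ^ n := Real.lt_pow_of_rpow_one_div_lt (by omega) (by positivity) (by rw [hκ]; linarith)
  have hκs : 0 < κ * s := mul_pos (by rw [hκ]; linarith) hs
  have hdiam : ENNReal.ofReal (κ * s) < 2 * EMetric.diam Ω := by
    rw [← mul_div_cancel₀ (κ * s) two_ne_zero, ENNReal.ofReal_mul zero_le_two, ENNReal.ofReal_ofNat]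
    exact (ENNReal.mul_lt_mul_iff_right two_ne_zero ENNReal.ofNat_ne_top).mpr hs2
  have hsmall := addHaar_ball_lt_ofReal_mul_pow volume hθ0 hs z
    (by rwa [finrank_euclideanSpace_fin])
  rw [finrank_euclideanSpace_fin] at hsmall
  exact nonempty_inter_diff_of_measure_lt (hsmall.trans_le (hreg z hz _ hκs hdiam))

theorem stmt12 (n : ℕ) (hn : 2 ≤ n)
    (Ω : Set (EuclideanSpace ℝ (Fin n))) (hopen : IsOpen Ω) (hconn : IsConnected Ω)
    (θ : ℝ) (hθ : θ ∈ Set.Ioo (0:ℝ) 1)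
    (hreg : ∀ x ∈ Ω, ∀ r : ℝ, 0 < r → ENNReal.ofReal r < 2 * EMetric.diam Ω →
      ENNReal.ofReal (θ * r ^ n) ≤ volume (Metric.ball x r ∩ Ω))
    (κ : ℝ)
    (hκ : κ = (2 * (volume (Metric.ball (0 : EuclideanSpace ℝ (Fin n)) 1)).toReal / θ)
      ^ ((1 : ℝ) / n) + 2)
    (z : EuclideanSpace ℝ (Fin n)) (hz : z ∈ Ω) (s : ℝ) (hs : 0 < s)
    (hs2 : ENNReal.ofReal (κ * s / 2) < EMetric.diam Ω) :
    (Ω ∩ (Metric.ball z (κ * s) \ Metric.ball z s)).Nonempty :=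
  stmt12_general n hn Ω θ hθ hreg κ hκ z hz s hs hs2
end

section
/- Let n ≥ 2, 0 < s < 1, 1 ≤ p < n/s. There is a constant C > 0 depending only on n, s, p such that for every measurable set E ⊂ ℝⁿ with 0 < |E| < ∞ and every x ∈ ℝⁿ, ∫_{ℝⁿ\E} dy/|x-y|^{n+sp} ≥ C |E|^{-sp/n}. -/
open MeasureTheory Set Filter
open scoped ENNReal NNReal Topology

/-!
Let `B` be the ball around `x` with `|B| = 2|E|`, of radius `r = (2|E|/ω_n)^{1/n}` where `ω_n` is
the volume of the unit ball. At least `|E|` of `B` lies outside `E`, and there the kernel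
`|x - y|^{-(n+sp)}` is at least `r^{-(n+sp)}`, so the integral is at least
`r^{-(n+sp)} |E| = (ω_n/2)^{(n+sp)/n} |E|^{-sp/n}`.
-/

open Metric Module Measure

theorem measureReal_ball_pos {X : Type*} [PseudoMetricSpace X] [ProperSpace X] [MeasurableSpace X]
    (μ : Measure X) [IsOpenPosMeasure μ] [IsFiniteMeasureOnCompacts μ] (x : X) {r : ℝ}
    (hr : 0 < r) : 0 < μ.real (ball x r) :=
  ENNReal.toReal_pos (measure_ball_pos μ x hr).ne' measure_ball_lt_top.ne

theorem le_setLIntegral_compl_one_div_norm_sub_rpow {E : Type*} [NormedAddCommGroup E]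
    [MeasurableSpace E] [OpensMeasurableSpace E] (μ : Measure E) [NullSingletonClass μ] (s : Set E)
    (x : E) {r e : ℝ} (he : 0 ≤ e) :
    ENNReal.ofReal (1 / r ^ e) * (μ (ball x r) - μ s)
      ≤ ∫⁻ y in sᶜ, ENNReal.ofReal (1 / ‖x - y‖ ^ e) ∂μ := by
  have h_ind : ∀ᵐ y ∂μ.restrict sᶜ,
      (ball x r).indicator (fun _ ↦ ENNReal.ofReal (1 / r ^ e)) y
        ≤ ENNReal.ofReal (1 / ‖x - y‖ ^ e) := by
    filter_upwards [ae_restrict_of_ae (compl_mem_ae_iff.mpr (measure_singleton x))] with y hyx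
    refine indicator_apply_le' (fun hy ↦ ?_) (fun _ ↦ zero_le)
    have hxy : 0 < ‖x - y‖ := norm_sub_pos_iff.mpr (Ne.symm hyx)
    rw [mem_ball, dist_eq_norm, norm_sub_rev] at hy
    gcongr
  calc ENNReal.ofReal (1 / r ^ e) * (μ (ball x r) - μ s)
      ≤ ENNReal.ofReal (1 / r ^ e) * μ (ball x r ∩ sᶜ) := by
        rw [← sdiff_eq]; gcongr; exact le_measure_sdiff
    _ = ∫⁻ y in sᶜ, (ball x r).indicator (fun _ ↦ ENNReal.ofReal (1 / r ^ e)) y ∂μ := by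
        rw [lintegral_indicator_const measurableSet_ball,
          Measure.restrict_apply measurableSet_ball]
    _ ≤ ∫⁻ y in sᶜ, ENNReal.ofReal (1 / ‖x - y‖ ^ e) ∂μ := lintegral_mono_ae h_ind

section AddHaar

variable {E : Type*} [NormedAddCommGroup E] [NormedSpace ℝ E] [MeasurableSpace E] [BorelSpace E]
  [FiniteDimensional ℝ E] [Nontrivial E] (μ : Measure E) [IsAddHaarMeasure μ]

theorem addHaar_ball_rpow_inv_finrank (x : E) {a : ℝ} (ha : 0 < a) :
    μ (ball x ((a / μ.real (ball 0 1)) ^ (finrank ℝ E : ℝ)⁻¹)) = ENNReal.ofReal a := by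
  have hω := measureReal_ball_pos μ (0 : E) one_pos
  rw [addHaar_ball_of_pos μ x (by positivity), ← Real.rpow_natCast,
    ← Real.rpow_mul (by positivity), inv_mul_cancel₀ (Nat.cast_pos.mpr finrank_pos).ne',
    Real.rpow_one,
    ← ofReal_measureReal measure_ball_lt_top.ne, ← ENNReal.ofReal_mul (by positivity),
    div_mul_cancel₀ _ hω.ne']

theorem ofReal_mul_rpow_le_setLIntegral_compl_one_div_norm_sub_rpow (s : Set E) (x : E)
    (hs₀ : 0 < μ s) (hs : μ s ≠ ∞) {e : ℝ} (he : 0 ≤ e) :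
    ENNReal.ofReal ((μ.real (ball 0 1) / 2) ^ (e / finrank ℝ E)
        * μ.real s ^ (1 - e / finrank ℝ E))
      ≤ ∫⁻ y in sᶜ, ENNReal.ofReal (1 / ‖x - y‖ ^ e) ∂μ := by
  set d : ℝ := (finrank ℝ E : ℝ)
  set ω := μ.real (ball 0 1)
  set m := μ.real s
  have hm : 0 < m := ENNReal.toReal_pos hs₀.ne' hs
  have hω : 0 < ω := measureReal_ball_pos μ 0 one_pos
  set r := (2 * m / ω) ^ d⁻¹
  have h_ball : μ (ball x r) - μ s = ENNReal.ofReal m := by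
    rw [addHaar_ball_rpow_inv_finrank μ x (by positivity), ← ofReal_measureReal hs,
      ← ENNReal.ofReal_sub _ hm.le]
    ring_nf
  have h_const : (ω / 2) ^ (e / d) * m ^ (1 - e / d) = 1 / r ^ e * m := by
    rw [← Real.rpow_mul (by positivity), inv_mul_eq_div, Real.rpow_sub hm, Real.rpow_one,
      Real.div_rpow (by positivity) hω.le, Real.div_rpow hω.le zero_le_two,
      Real.mul_rpow zero_le_two hm.le]
    field_simp
  rw [h_const, ENNReal.ofReal_mul (by positivity), ← h_ball]
  exact le_setLIntegral_compl_one_div_norm_sub_rpow μ s x he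

end AddHaar

theorem stmt14_general (n : ℕ) (hn : 2 ≤ n) (s p : ℝ) (hs1 : 0 < s)
    (hp1 : 1 ≤ p) :
    ∃ C > (0:ℝ), ∀ E : Set (EuclideanSpace ℝ (Fin n)), MeasurableSet E →
      0 < volume E → volume E < ⊤ → ∀ x : EuclideanSpace ℝ (Fin n),
      ENNReal.ofReal (C * (volume E).toReal ^ (-(s * p) / (n : ℝ)))
        ≤ ∫⁻ y in Eᶜ, ENNReal.ofReal (1 / ‖x - y‖ ^ ((n : ℝ) + s * p)) := by
  have : Nontrivial (EuclideanSpace ℝ (Fin n)) :=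
    Module.nontrivial_of_finrank_pos (R := ℝ) (by rw [finrank_euclideanSpace_fin]; omega)
  have hω := measureReal_ball_pos volume (0 : EuclideanSpace ℝ (Fin n)) one_pos
  refine ⟨(volume.real (ball (0 : EuclideanSpace ℝ (Fin n)) 1) / 2) ^ ((n + s * p) / n),
    by positivity, fun E _ hE₀ hE x ↦ ?_⟩
  have h_exp : -(s * p) / n = 1 - (n + s * p) / n := by
    field_simp
    ring
  have := ofReal_mul_rpow_le_setLIntegral_compl_one_div_norm_sub_rpow volume E x hE₀ hE.ne
    (e := n + s * p) (by positivity)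
  rwa [finrank_euclideanSpace_fin, ← h_exp] at this

theorem stmt14 (n : ℕ) (hn : 2 ≤ n) (s p : ℝ) (hs1 : 0 < s) (hs2 : s < 1)
    (hp1 : 1 ≤ p) (hp2 : p < (n : ℝ) / s) :
    ∃ C > (0:ℝ), ∀ E : Set (EuclideanSpace ℝ (Fin n)), MeasurableSet E →
      0 < volume E → volume E < ⊤ → ∀ x : EuclideanSpace ℝ (Fin n),
      ENNReal.ofReal (C * (volume E).toReal ^ (-(s * p) / (n : ℝ)))
        ≤ ∫⁻ y in Eᶜ, ENNReal.ofReal (1 / ‖x - y‖ ^ ((n : ℝ) + s * p)) :=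
  stmt14_general n hn s p hs1 hp1
end
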